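/- In the fixed run setting, for all terms t and all i ∈ {0,…,n}, if σ(T_i) ⊢dy t, then there is a typed normal ⊢dy proof of σ(T_i) ⊢ t. -/

import Mathlib

open scoped Classical

/-! ## Terms -/

inductive Term : Type
  | name : ℕ → Term
  | var  : ℕ → Term
  | pair : Term → Term → Term
  | enc  : Term → Term → Term
deriving DecidableEq

namespace Term

def subterms : Term → Set Term
  | name n => {name n}
  | var x => {var x}
  | pair a b => insert (pair a b) (subterms a ∪ subterms b)
  | enc a b => insert (enc a b) (subterms a ∪ subterms b)

def tvars : Term → Set ℕ
  | name _ => ∅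
  | var x => {x}
  | pair a b => tvars a ∪ tvars b
  | enc a b => tvars a ∪ tvars b

/-- A term is ground if it contains no variables. -/
def ground (t : Term) : Prop := tvars t = ∅

end Term

def sSubterms (X : Set Term) : Set Term := ⋃ t ∈ X, t.subterms
def sVars (X : Set Term) : Set ℕ := ⋃ t ∈ X, t.tvars
def varTerms (V : Set ℕ) : Set Term := Term.var '' V
def pairSubterms (E : Set (Term × Term)) : Set Term :=
  ⋃ e ∈ E, (Term.subterms e.1 ∪ Term.subterms e.2)

/-! ## Substitutions -/

abbrev Subst := ℕ → Term

namespace Subst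

def app (σ : Subst) : Term → Term
  | Term.name n => Term.name n
  | Term.var x => σ x
  | Term.pair a b => Term.pair (app σ a) (app σ b)
  | Term.enc a b => Term.enc (app σ a) (app σ b)

def dom (σ : Subst) : Set ℕ := {x | σ x ≠ Term.var x}

/-- A (totally) ground substitution. -/
def isGround (σ : Subst) : Prop := ∀ x, (σ x).ground

end Subst

def pairImg (σ : Subst) (E : Set (Term × Term)) : Set (Term × Term) :=
  (fun e => (σ.app e.1, σ.app e.2)) '' E

/-! ## Dolev-Yao derivability.  `inv` gives the inverse of a key. -/

inductive dy (inv : Term → Term) (X : Set Term) : Term → Prop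
  | ax {t} : t ∈ X → dy inv X t
  | pair {t u} : dy inv X t → dy inv X u → dy inv X (Term.pair t u)
  | enc {t k} : dy inv X t → dy inv X k → dy inv X (Term.enc t k)
  | fst {t u} : dy inv X (Term.pair t u) → dy inv X t
  | snd {t u} : dy inv X (Term.pair t u) → dy inv X u
  | dec {t k} : dy inv X (Term.enc t k) → dy inv X (inv k) → dy inv X t

/-! ## Positions -/

def positions : Term → Set (List Bool)
  | Term.pair a b =>
      insert [] ((List.cons false) '' positions a ∪ (List.cons true) '' positions b)
  | Term.enc a b =>
      insert [] ((List.cons false) '' positions a ∪ (List.cons true) '' positions b)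
  | _ => {[]}

def subtermAt : Term → List Bool → Option Term
  | t, [] => some t
  | Term.pair a b, i :: p => subtermAt (if i then b else a) p
  | Term.enc a b, i :: p => subtermAt (if i then b else a) p
  | _, _ :: _ => none

/-- Positions of `t` at which the variable `x` occurs. -/
def posof (x : ℕ) (t : Term) : Set (List Bool) := {p | subtermAt t p = some (Term.var x)}

/-- Replace the subterms at every position in `P` by `r`. -/
noncomputable def replaceAt : Term → Set (List Bool) → Term → Term
  | Term.pair a b, P, r =>
      if [] ∈ P then r
      else Term.pair (replaceAt a {p | false :: p ∈ P} r) (replaceAt b {p | true :: p ∈ P} r)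
  | Term.enc a b, P, r =>
      if [] ∈ P then r
      else Term.enc (replaceAt a {p | false :: p ∈ P} r) (replaceAt b {p | true :: p ∈ P} r)
  | t, P, r => if [] ∈ P then r else t

/-- `Qpos t p`: the root position together with all positions `q ++ [i]` of `t`
where `q` is a proper prefix of `p`. -/
def Qpos (t : Term) (p : List Bool) : Set (List Bool) :=
  insert [] {q | q ∈ positions t ∧ ∃ q' i, q = q' ++ [i] ∧ q' <+: p ∧ q' ≠ p}

/-- Abstractable positions of `t` with respect to `S`. -/
def absPos (inv : Term → Term) (S : Set Term) (t : Term) : Set (List Bool) :=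
  {p | p ∈ positions t ∧ ∀ q ∈ Qpos t p, ∀ s, subtermAt t q = some s → dy inv S s}

/-! ## Assertions: `∃ bv. (l ⋈ r)` -/

structure Assertion : Type where
  bv : List ℕ
  l : Term
  r : Term
deriving DecidableEq

namespace Assertion

def bvSet (α : Assertion) : Set ℕ := {x | x ∈ α.bv}
def fv (α : Assertion) : Set ℕ := (α.l.tvars ∪ α.r.tvars) \ α.bvSet
def vars (α : Assertion) : Set ℕ := α.l.tvars ∪ α.r.tvars ∪ α.bvSet
def subterms (α : Assertion) : Set Term := α.l.subterms ∪ α.r.subterms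

end Assertion

def afvSet (A : Set Assertion) : Set ℕ := ⋃ β ∈ A, β.fv
def abvSet (A : Set Assertion) : Set ℕ := ⋃ β ∈ A, β.bvSet
def aVarsSet (A : Set Assertion) : Set ℕ := ⋃ β ∈ A, β.vars
def aSubtermsSet (A : Set Assertion) : Set Term := ⋃ β ∈ A, β.subterms

/-- The public terms of an assertion: maximal subterms containing no quantifiable
variable (`Vq` is the set of quantifiable variables). -/
def pubs (Vq : Set ℕ) (α : Assertion) : Set Term :=
  {t | t ∈ α.subterms ∧ t.tvars ∩ Vq = ∅ ∧
    ¬ ∃ u ∈ α.subterms, t ≠ u ∧ t ∈ u.subterms ∧ u.tvars ∩ Vq = ∅}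

/-- prepend an existential quantifier -/
def exA (x : ℕ) (α : Assertion) : Assertion := ⟨x :: α.bv, α.l, α.r⟩

/-- The `0^k` prefix of term positions of an assertion. -/
def prefixL (α : Assertion) : List Bool := List.replicate α.bv.length false

/-- Positions of an assertion at which the variable `x` occurs. -/
def aPosOf (x : ℕ) (α : Assertion) : Set (List Bool) :=
  (fun p => prefixL α ++ false :: p) '' posof x α.l ∪
  (fun p => prefixL α ++ true :: p) '' posof x α.r

/-- Replace the subterms at every (assertion) position in `P` by `r`. -/
noncomputable def aReplace (α : Assertion) (P : Set (List Bool)) (r : Term) : Assertion :=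
  ⟨α.bv,
   replaceAt α.l {p | (prefixL α ++ false :: p) ∈ P} r,
   replaceAt α.r {p | (prefixL α ++ true :: p) ∈ P} r⟩

/-- Abstractable positions of an assertion with respect to `S`. -/
def aAbs (inv : Term → Term) (S : Set Term) (α : Assertion) : Set (List Bool) :=
  (fun p => prefixL α ++ false :: p) '' absPos inv (S ∪ varTerms α.bvSet) α.l ∪
  (fun p => prefixL α ++ true :: p) '' absPos inv (S ∪ varTerms α.bvSet) α.r

/-! ## The assertion derivation system ⊢a -/

inductive adrv (inv : Term → Term) : Set Term → Set Assertion → Assertion → Prop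
  | ax {S A α} : α ∈ A → adrv inv S A α
  | eq {S A t} : dy inv S t → adrv inv S A ⟨[], t, t⟩
  | sym {S A t u} : adrv inv S A ⟨[], t, u⟩ → adrv inv S A ⟨[], u, t⟩
  | trans {S A t u v} : adrv inv S A ⟨[], t, u⟩ → adrv inv S A ⟨[], u, v⟩ →
      adrv inv S A ⟨[], t, v⟩
  | consPair {S A t0 t1 u0 u1} : adrv inv S A ⟨[], t0, u0⟩ → adrv inv S A ⟨[], t1, u1⟩ →
      adrv inv S A ⟨[], Term.pair t0 t1, Term.pair u0 u1⟩
  | consEnc {S A t0 t1 u0 u1} : adrv inv S A ⟨[], t0, u0⟩ → adrv inv S A ⟨[], t1, u1⟩ →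
      adrv inv S A ⟨[], Term.enc t0 t1, Term.enc u0 u1⟩
  | projPairFst {S A t0 t1 u0 u1} :
      adrv inv S A ⟨[], Term.pair t0 t1, Term.pair u0 u1⟩ →
      dy inv S t0 → dy inv S t1 → dy inv S u0 → dy inv S u1 → adrv inv S A ⟨[], t0, u0⟩
  | projPairSnd {S A t0 t1 u0 u1} :
      adrv inv S A ⟨[], Term.pair t0 t1, Term.pair u0 u1⟩ →
      dy inv S t0 → dy inv S t1 → dy inv S u0 → dy inv S u1 → adrv inv S A ⟨[], t1, u1⟩
  | projEncFst {S A t0 t1 u0 u1} :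
      adrv inv S A ⟨[], Term.enc t0 t1, Term.enc u0 u1⟩ →
      dy inv S t0 → dy inv S t1 → dy inv S u0 → dy inv S u1 → adrv inv S A ⟨[], t0, u0⟩
  | projEncSnd {S A t0 t1 u0 u1} :
      adrv inv S A ⟨[], Term.enc t0 t1, Term.enc u0 u1⟩ →
      dy inv S t0 → dy inv S t1 → dy inv S u0 → dy inv S u1 → adrv inv S A ⟨[], t1, u1⟩
  | exI {S A α x t} : adrv inv S A (aReplace α (aPosOf x α) t) → dy inv S t →
      aPosOf x α ⊆ aAbs inv (insert (Term.var x) S) α → adrv inv S A (exA x α)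
  | exE {S A α x γ} : adrv inv S A (exA x α) →
      adrv inv (insert (Term.var x) S) (insert α A) γ →
      x ∉ sVars S → x ∉ afvSet A → x ∉ γ.fv → adrv inv S A γ

/-- ⊢a without the ∃-elimination rule. -/
inductive adrvNX (inv : Term → Term) : Set Term → Set Assertion → Assertion → Prop
  | ax {S A α} : α ∈ A → adrvNX inv S A α
  | eq {S A t} : dy inv S t → adrvNX inv S A ⟨[], t, t⟩
  | sym {S A t u} : adrvNX inv S A ⟨[], t, u⟩ → adrvNX inv S A ⟨[], u, t⟩
  | trans {S A t u v} : adrvNX inv S A ⟨[], t, u⟩ → adrvNX inv S A ⟨[], u, v⟩ →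
      adrvNX inv S A ⟨[], t, v⟩
  | consPair {S A t0 t1 u0 u1} : adrvNX inv S A ⟨[], t0, u0⟩ → adrvNX inv S A ⟨[], t1, u1⟩ →
      adrvNX inv S A ⟨[], Term.pair t0 t1, Term.pair u0 u1⟩
  | consEnc {S A t0 t1 u0 u1} : adrvNX inv S A ⟨[], t0, u0⟩ → adrvNX inv S A ⟨[], t1, u1⟩ →
      adrvNX inv S A ⟨[], Term.enc t0 t1, Term.enc u0 u1⟩
  | projPairFst {S A t0 t1 u0 u1} :
      adrvNX inv S A ⟨[], Term.pair t0 t1, Term.pair u0 u1⟩ →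
      dy inv S t0 → dy inv S t1 → dy inv S u0 → dy inv S u1 → adrvNX inv S A ⟨[], t0, u0⟩
  | projPairSnd {S A t0 t1 u0 u1} :
      adrvNX inv S A ⟨[], Term.pair t0 t1, Term.pair u0 u1⟩ →
      dy inv S t0 → dy inv S t1 → dy inv S u0 → dy inv S u1 → adrvNX inv S A ⟨[], t1, u1⟩
  | projEncFst {S A t0 t1 u0 u1} :
      adrvNX inv S A ⟨[], Term.enc t0 t1, Term.enc u0 u1⟩ →
      dy inv S t0 → dy inv S t1 → dy inv S u0 → dy inv S u1 → adrvNX inv S A ⟨[], t0, u0⟩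
  | projEncSnd {S A t0 t1 u0 u1} :
      adrvNX inv S A ⟨[], Term.enc t0 t1, Term.enc u0 u1⟩ →
      dy inv S t0 → dy inv S t1 → dy inv S u0 → dy inv S u1 → adrvNX inv S A ⟨[], t1, u1⟩
  | exI {S A α x t} : adrvNX inv S A (aReplace α (aPosOf x α) t) → dy inv S t →
      aPosOf x α ⊆ aAbs inv (insert (Term.var x) S) α → adrvNX inv S A (exA x α)

/-- The equality fragment ⊢eq : derivability of equalities `t ⋈ u` from a set `T` of
terms and a set `E` of equalities, without the quantifier rules. -/
inductive eqdrv (inv : Term → Term) (T : Set Term) (E : Set (Term × Term)) :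
    Term → Term → Prop
  | ax {t u} : (t, u) ∈ E → eqdrv inv T E t u
  | eq {t} : dy inv T t → eqdrv inv T E t t
  | sym {t u} : eqdrv inv T E t u → eqdrv inv T E u t
  | trans {t u v} : eqdrv inv T E t u → eqdrv inv T E u v → eqdrv inv T E t v
  | consPair {t0 t1 u0 u1} : eqdrv inv T E t0 u0 → eqdrv inv T E t1 u1 →
      eqdrv inv T E (Term.pair t0 t1) (Term.pair u0 u1)
  | consEnc {t0 t1 u0 u1} : eqdrv inv T E t0 u0 → eqdrv inv T E t1 u1 →
      eqdrv inv T E (Term.enc t0 t1) (Term.enc u0 u1)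
  | projPairFst {t0 t1 u0 u1} : eqdrv inv T E (Term.pair t0 t1) (Term.pair u0 u1) →
      dy inv T t0 → dy inv T t1 → dy inv T u0 → dy inv T u1 → eqdrv inv T E t0 u0
  | projPairSnd {t0 t1 u0 u1} : eqdrv inv T E (Term.pair t0 t1) (Term.pair u0 u1) →
      dy inv T t0 → dy inv T t1 → dy inv T u0 → dy inv T u1 → eqdrv inv T E t1 u1
  | projEncFst {t0 t1 u0 u1} : eqdrv inv T E (Term.enc t0 t1) (Term.enc u0 u1) →
      dy inv T t0 → dy inv T t1 → dy inv T u0 → dy inv T u1 → eqdrv inv T E t0 u0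
  | projEncSnd {t0 t1 u0 u1} : eqdrv inv T E (Term.enc t0 t1) (Term.enc u0 u1) →
      dy inv T t0 → dy inv T t1 → dy inv T u0 → dy inv T u1 → eqdrv inv T E t1 u1

/-! ## Sanitized pairs, kernels, purity, consistency -/

/-- `(S;A)` is sanitized: free variables avoid `Vq`, bound variables are from `Vq`,
and the public terms of each assertion of `A` belong to `S`. -/
def sanitized (Vq : Set ℕ) (S : Set Term) (A : Set Assertion) : Prop :=
  ((sVars S ∪ afvSet A) ∩ Vq = ∅) ∧ (∀ β ∈ A, β.bvSet ⊆ Vq) ∧ (∀ β ∈ A, pubs Vq β ⊆ S)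

def kerT (S : Set Term) (A : Set Assertion) : Set Term := S ∪ varTerms (abvSet A)
def kerE (A : Set Assertion) : Set (Term × Term) := {e | ∃ β ∈ A, e = (β.l, β.r)}
def kerA (A : Set Assertion) : Set Assertion := {γ | ∃ β ∈ A, γ = Assertion.mk [] β.l β.r}

/-- The set of assertions corresponding to a set of equalities. -/
def EtoA (E : Set (Term × Term)) : Set Assertion := {γ | ∃ e ∈ E, γ = Assertion.mk [] e.1 e.2}

/-- `(T;E)` is pure if it is the kernel of some sanitized pair. -/
def isPure (Vq : Set ℕ) (T : Set Term) (E : Set (Term × Term)) : Prop :=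
  ∃ S A, sanitized Vq S A ∧ T = kerT S A ∧ E = kerE A

/-- `(T;E)` is consistent if some ground substitution unifies every equality in `E`. -/
def consistentE (E : Set (Term × Term)) : Prop :=
  ∃ lam : Subst, lam.isGround ∧ ∀ e ∈ E, lam.app e.1 = lam.app e.2

/-- `M`-bounded substitution: every image has at most `M` distinct subterms. -/
def boundedSub (M : ℕ) (μ : Subst) : Prop :=
  ∀ x ∈ μ.dom, (Term.subterms (μ x)).ncard ≤ M



/-! ## Dolev-Yao proof trees -/

inductive DPT : Type
  | ax (t : Term)
  | pair (p q : DPT)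
  | enc (p q : DPT)
  | fst (p : DPT)
  | snd (p : DPT)
  | dec (p q : DPT)

namespace DPT

/-- The conclusion of a DY proof tree, if it is well-formed. -/
def concl (inv : Term → Term) : DPT → Option Term
  | ax t => some t
  | pair p q =>
      match concl inv p, concl inv q with
      | some a, some b => some (Term.pair a b)
      | _, _ => none
  | enc p q =>
      match concl inv p, concl inv q with
      | some a, some b => some (Term.enc a b)
      | _, _ => none
  | fst p =>
      match concl inv p with
      | some (Term.pair a _) => some a
      | _ => none
  | snd p =>
      match concl inv p with
      | some (Term.pair _ b) => some b
      | _ => none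
  | dec p q =>
      match concl inv p, concl inv q with
      | some (Term.enc a k), some k' => if k' = inv k then some a else none
      | _, _ => none

/-- Validity of a DY proof tree from the set `X`. -/
def valid (inv : Term → Term) (X : Set Term) : DPT → Prop
  | ax t => t ∈ X
  | pair p q => valid inv X p ∧ valid inv X q
  | enc p q => valid inv X p ∧ valid inv X q
  | fst p => valid inv X p ∧ ∃ a b, concl inv p = some (Term.pair a b)
  | snd p => valid inv X p ∧ ∃ a b, concl inv p = some (Term.pair a b)
  | dec p q => valid inv X p ∧ valid inv X q ∧
      ∃ a k, concl inv p = some (Term.enc a k) ∧ concl inv q = some (inv k)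

def endsConstructor : DPT → Prop
  | pair _ _ => True
  | enc _ _ => True
  | _ => False

def endsDestructor : DPT → Prop
  | fst _ => True
  | snd _ => True
  | dec _ _ => True
  | _ => False

/-- Normal DY proofs: no constructor conclusion is the major premise of a destructor. -/
def normal : DPT → Prop
  | ax _ => True
  | pair p q => normal p ∧ normal q
  | enc p q => normal p ∧ normal q
  | fst p => normal p ∧ ¬ endsConstructor p
  | snd p => normal p ∧ ¬ endsConstructor p
  | dec p q => normal p ∧ normal q ∧ ¬ endsConstructor p

/-- All terms occurring in a DY proof tree (conclusions of subproofs). -/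
def termSet (inv : Term → Term) : DPT → Set Term
  | ax t => {t}
  | pair p q => {a | concl inv (pair p q) = some a} ∪ termSet inv p ∪ termSet inv q
  | enc p q => {a | concl inv (enc p q) = some a} ∪ termSet inv p ∪ termSet inv q
  | fst p => {a | concl inv (fst p) = some a} ∪ termSet inv p
  | snd p => {a | concl inv (snd p) = some a} ∪ termSet inv p
  | dec p q => {a | concl inv (dec p q) = some a} ∪ termSet inv p ∪ termSet inv q

/-- Typed DY proof w.r.t. a set `G`: every subproof ends in a constructor rule or
has its conclusion in `G`. -/
def typed (inv : Term → Term) (G : Set Term) : DPT → Prop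
  | ax t => t ∈ G
  | pair p q => typed inv G p ∧ typed inv G q
  | enc p q => typed inv G p ∧ typed inv G q
  | fst p => typed inv G p ∧ ∀ a, concl inv (fst p) = some a → a ∈ G
  | snd p => typed inv G p ∧ ∀ a, concl inv (snd p) = some a → a ∈ G
  | dec p q => typed inv G p ∧ typed inv G q ∧ ∀ a, concl inv (dec p q) = some a → a ∈ G

end DPT

/-! ## Equality proof trees (the system ⊢eq), with n-ary trans -/

inductive EPT : Type
  | ax (t u : Term)
  | eq (t : Term) (d : DPT)
  | sym (t u : Term) (p : EPT)
  | trans (t u : Term) (ps : List EPT)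
  | consPair (t0 u0 t1 u1 : Term) (p q : EPT)
  | consEnc (t0 u0 t1 u1 : Term) (p q : EPT)
  | projPairFst (t0 t1 u0 u1 : Term) (p : EPT)
  | projPairSnd (t0 t1 u0 u1 : Term) (p : EPT)
  | projEncFst (t0 t1 u0 u1 : Term) (p : EPT)
  | projEncSnd (t0 t1 u0 u1 : Term) (p : EPT)

namespace EPT

/-- The conclusion `t ⋈ u` of an equality proof tree. -/
def concl : EPT → Term × Term
  | ax t u => (t, u)
  | eq t _ => (t, t)
  | sym t u _ => (t, u)
  | trans t u _ => (t, u)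
  | consPair t0 u0 t1 u1 _ _ => (Term.pair t0 t1, Term.pair u0 u1)
  | consEnc t0 u0 t1 u1 _ _ => (Term.enc t0 t1, Term.enc u0 u1)
  | projPairFst t0 _ u0 _ _ => (t0, u0)
  | projPairSnd _ t1 _ u1 _ => (t1, u1)
  | projEncFst t0 _ u0 _ _ => (t0, u0)
  | projEncSnd _ t1 _ u1 _ => (t1, u1)

/-- Immediate subproof relation. -/
inductive Sub : EPT → EPT → Prop
  | sym {t u p} : Sub p (EPT.sym t u p)
  | trans {t u ps p} : p ∈ ps → Sub p (EPT.trans t u ps)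
  | consPairL {t0 u0 t1 u1 p q} : Sub p (EPT.consPair t0 u0 t1 u1 p q)
  | consPairR {t0 u0 t1 u1 p q} : Sub q (EPT.consPair t0 u0 t1 u1 p q)
  | consEncL {t0 u0 t1 u1 p q} : Sub p (EPT.consEnc t0 u0 t1 u1 p q)
  | consEncR {t0 u0 t1 u1 p q} : Sub q (EPT.consEnc t0 u0 t1 u1 p q)
  | projPairFst {t0 t1 u0 u1 p} : Sub p (EPT.projPairFst t0 t1 u0 u1 p)
  | projPairSnd {t0 t1 u0 u1 p} : Sub p (EPT.projPairSnd t0 t1 u0 u1 p)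
  | projEncFst {t0 t1 u0 u1 p} : Sub p (EPT.projEncFst t0 t1 u0 u1 p)
  | projEncSnd {t0 t1 u0 u1 p} : Sub p (EPT.projEncSnd t0 t1 u0 u1 p)

/-- `Subproof p q`: `p` is a (not necessarily proper) subproof of `q`. -/
def Subproof : EPT → EPT → Prop := Relation.ReflTransGen Sub

def isAx : EPT → Prop
  | ax _ _ => True
  | _ => False

def isTrans : EPT → Prop
  | trans _ _ _ => True
  | _ => False

def isCons : EPT → Prop
  | consPair _ _ _ _ _ _ => True
  | consEnc _ _ _ _ _ _ => True
  | _ => False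

def isProj : EPT → Prop
  | projPairFst _ _ _ _ _ => True
  | projPairSnd _ _ _ _ _ => True
  | projEncFst _ _ _ _ _ => True
  | projEncSnd _ _ _ _ _ => True
  | _ => False

/-- The ⊢eq proof contains an occurrence of the cons rule. -/
def containsCons (π : EPT) : Prop := ∃ π', Subproof π' π ∧ isCons π'

/-- Local validity of the last rule of an equality proof tree. -/
def localValid (inv : Term → Term) (T : Set Term) (E : Set (Term × Term)) : EPT → Prop
  | ax t u => (t, u) ∈ E
  | eq t d => DPT.valid inv T d ∧ DPT.concl inv d = some t
  | sym t u p => concl p = (u, t)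
  | trans t u ps =>
      ps ≠ [] ∧ (ps.head?.map fun p => (concl p).1) = some t ∧
      (ps.getLast?.map fun p => (concl p).2) = some u ∧
      List.Chain' (fun p q => (concl p).2 = (concl q).1) ps
  | consPair t0 u0 t1 u1 p q => concl p = (t0, u0) ∧ concl q = (t1, u1)
  | consEnc t0 u0 t1 u1 p q => concl p = (t0, u0) ∧ concl q = (t1, u1)
  | projPairFst t0 t1 u0 u1 p => concl p = (Term.pair t0 t1, Term.pair u0 u1) ∧
      dy inv T t0 ∧ dy inv T t1 ∧ dy inv T u0 ∧ dy inv T u1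
  | projPairSnd t0 t1 u0 u1 p => concl p = (Term.pair t0 t1, Term.pair u0 u1) ∧
      dy inv T t0 ∧ dy inv T t1 ∧ dy inv T u0 ∧ dy inv T u1
  | projEncFst t0 t1 u0 u1 p => concl p = (Term.enc t0 t1, Term.enc u0 u1) ∧
      dy inv T t0 ∧ dy inv T t1 ∧ dy inv T u0 ∧ dy inv T u1
  | projEncSnd t0 t1 u0 u1 p => concl p = (Term.enc t0 t1, Term.enc u0 u1) ∧
      dy inv T t0 ∧ dy inv T t1 ∧ dy inv T u0 ∧ dy inv T u1

/-- Validity of an equality proof tree from `(T;E)`. -/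
def valid (inv : Term → Term) (T : Set Term) (E : Set (Term × Term)) (π : EPT) : Prop :=
  ∀ π', Subproof π' π → localValid inv T E π'

/-- Local normality conditions for the last rule. -/
def localNormal : EPT → Prop
  | ax _ _ => True
  | eq _ d => DPT.normal d ∧ DPT.endsDestructor d
  | sym _ _ p => isAx p
  | trans _ _ ps =>
      (∀ p ∈ ps, ¬ isTrans p ∧ (concl p).1 ≠ (concl p).2) ∧
      List.Chain' (fun p q => ¬ (isCons p ∧ isCons q)) ps
  | consPair _ _ _ _ _ _ => True
  | consEnc _ _ _ _ _ _ => True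
  | projPairFst _ _ _ _ p => ¬ containsCons p
  | projPairSnd _ _ _ _ p => ¬ containsCons p
  | projEncFst _ _ _ _ p => ¬ containsCons p
  | projEncSnd _ _ _ _ p => ¬ containsCons p

/-- A normal ⊢eq proof. -/
def normalP (π : EPT) : Prop := ∀ π', Subproof π' π → localNormal π'

/-- The DY subproof attached to an `eq` node, if any. -/
def dSub : EPT → Option DPT
  | eq _ d => some d
  | _ => none

/-- All terms occurring in an ⊢eq proof: the terms of the conclusions of all
subproofs, including the DY subproofs. -/
def termSet (inv : Term → Term) (π : EPT) : Set Term :=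
  {a | ∃ π', Subproof π' π ∧
    (a = (concl π').1 ∨ a = (concl π').2 ∨
      ∃ d, dSub π' = some d ∧ a ∈ DPT.termSet inv d)}

/-- Typed ⊢eq proof w.r.t. a set `Typ` of typed terms: every subproof contains
cons, or proves a trivial equality, or has typed conclusion terms. -/
def typedP (Typ : Set Term) (π : EPT) : Prop :=
  ∀ π', Subproof π' π →
    containsCons π' ∨ (concl π').1 = (concl π').2 ∨
      ((concl π').1 ∈ Typ ∧ (concl π').2 ∈ Typ)

end EPT



/-! ## The fixed run setting -/

/-- A fixed run of a protocol: at step `i` (for `1 ≤ i ≤ n`) the honest agent `uᵢ`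
receives the assertion `β i` from the intruder and sends the assertion `α i`;
`(T i; E i)` and `(U i; F i)` are the kernels of the knowledge states of the
intruder and of `uᵢ`; `σ` is the ground substitution of the run, `μ i`/`θ i` the
witness substitutions, `ω` their composition, and `m` the spare name. -/
structure RunSetting : Type where
  inv : Term → Term
  Vq : Set ℕ
  n : ℕ
  β : ℕ → Assertion
  α : ℕ → Assertion
  T : ℕ → Set Term
  E : ℕ → Set (Term × Term)
  U : ℕ → Set Term
  F : ℕ → Set (Term × Term)
  σ : Subst
  μ : ℕ → Subst
  θ : ℕ → Subst
  ω : Subst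
  m : ℕ
  -- well-formedness of the communicated assertions
  hβbv : ∀ i, 1 ≤ i → i ≤ n → (β i).bvSet ⊆ Vq
  hαbv : ∀ i, 1 ≤ i → i ≤ n → (α i).bvSet ⊆ Vq
  hβfv : ∀ i, 1 ≤ i → i ≤ n → (β i).fv ∩ Vq = ∅
  hαfv : ∀ i, 1 ≤ i → i ≤ n → (α i).fv ∩ Vq = ∅
  -- σ is ground, defined on the intruder variables of the run, and fixes Vq
  hσVq : ∀ x ∈ Vq, σ x = Term.var x
  hσground : ∀ x ∈ σ.dom, (σ x).ground
  -- evolution of the kernels of the intruder's knowledge state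
  hT0 : ∀ t ∈ T 0, t.ground
  hE0 : E 0 = ∅
  hTmono : ∀ i, T i ⊆ T (i + 1)
  hEmono : ∀ i, E i ⊆ E (i + 1)
  hTstep : ∀ i, 1 ≤ i → i ≤ n →
    T i = T (i - 1) ∪ pubs Vq (α i) ∪ varTerms (α i).bvSet
  hEstep : ∀ i, 1 ≤ i → i ≤ n → E i = E (i - 1) ∪ {((α i).l, (α i).r)}
  -- knowledge states are finite
  hTfin : ∀ i, i ≤ n → (T i).Finite
  hEfin : ∀ i, i ≤ n → (E i).Finite
  hUfin : ∀ i, i ≤ n → (U i).Finite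
  hFfin : ∀ i, i ≤ n → (F i).Finite
  -- provenance of honest agents' kernels
  hUmem : ∀ i, 1 ≤ i → i ≤ n → ∀ t ∈ U i,
    (∃ x ∈ Vq, t = Term.var x) ∨ t.tvars ⊆ σ.dom
  hFmem : ∀ i, 1 ≤ i → i ≤ n → ∀ e ∈ F i,
    ∃ j, 1 ≤ j ∧ j ≤ i ∧ e = ((β j).l, (β j).r)
  -- variables sent by honest agents were received earlier (Observation 2 of the paper)
  hfvEarlier : ∀ i, 1 ≤ i → i ≤ n → ∀ x ∈ (α i).fv,
    ∃ j, 1 ≤ j ∧ j ≤ i ∧ x ∈ (β j).fv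
  -- witness substitutions and the derivability conditions of the run
  hμdom : ∀ i, 1 ≤ i → i ≤ n → (μ i).dom ⊆ (β i).bvSet
  hθdom : ∀ i, 1 ≤ i → i ≤ n → (θ i).dom ⊆ (α i).bvSet
  hμdy : ∀ i, 1 ≤ i → i ≤ n → ∀ x ∈ (μ i).dom,
    dy inv (Subst.app σ '' T (i - 1)) (μ i x)
  hμeq : ∀ i, 1 ≤ i → i ≤ n →
    eqdrv inv (Subst.app σ '' T (i - 1)) (pairImg σ (E (i - 1)))
      (σ.app ((μ i).app (β i).l)) (σ.app ((μ i).app (β i).r))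
  hθdy : ∀ i, 1 ≤ i → i ≤ n → ∀ x ∈ (θ i).dom,
    dy inv (Subst.app σ '' U i) (θ i x)
  hθeq : ∀ i, 1 ≤ i → i ≤ n →
    eqdrv inv (Subst.app σ '' U i) (pairImg σ (F i))
      (σ.app ((θ i).app (α i).l)) (σ.app ((θ i).app (α i).r))
  -- ω is the composition σμ₁θ₁…μₙθₙ
  hωσ : ∀ x, ω.app (σ x) = ω x
  hωμ : ∀ i, 1 ≤ i → i ≤ n → ∀ x, ω.app ((μ i) x) = ω x
  hωθ : ∀ i, 1 ≤ i → i ≤ n → ∀ x, ω.app ((θ i) x) = ω x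
  hωground : ∀ x ∈ ω.dom, (ω x).ground
  hωT : ∀ i, i ≤ n → ∀ t ∈ T i ∪ U i, (ω.app t).ground
  hωE : ∀ i, i ≤ n → ∀ e ∈ E i ∪ F i, (ω.app e.1).ground ∧ (ω.app e.2).ground
  -- the spare name m
  hm : Term.name m ∈ T 0
  hmβ : ∀ i, 1 ≤ i → i ≤ n →
    Term.name m ∉ (β i).subterms ∪ (α i).subterms
  hmμ : ∀ i, 1 ≤ i → i ≤ n → ∀ x ∈ (μ i).dom, Term.name m ∉ (μ i x).subterms
  hmθ : ∀ i, 1 ≤ i → i ≤ n → ∀ x ∈ (θ i).dom, Term.name m ∉ (θ i x).subterms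

namespace RunSetting

variable (R : RunSetting)

/-- The public terms of the `i`-th intruder send. -/
def IT (i : ℕ) : Set Term := pubs R.Vq (R.β i)

/-- The public terms of the `i`-th honest agent send. -/
def HT (i : ℕ) : Set Term := pubs R.Vq (R.α i)

/-- The type set 𝒞 of the run. -/
def C : Set Term :=
  ⋃ i ∈ Set.Iic R.n, (sSubterms (R.T i ∪ R.U i) ∪ pairSubterms (R.E i ∪ R.F i))

/-- The type set 𝒟 = 𝒞 ∖ 𝒱 of the run. -/
def D : Set Term := R.C \ Set.range Term.var

/-- A variable is minimal if its ω-image coincides with the ω-image of no term of 𝒟. -/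
def minimal (x : ℕ) : Prop := x ∈ R.ω.dom ∧ ¬ ∃ t ∈ R.D, R.ω.app t = R.ω x

/-- A term is zappable if it ω-unifies with some minimal variable. -/
def zappable (t : Term) : Prop := ∃ x, R.minimal x ∧ R.ω.app t = R.ω x

/-- The zap of a term: zappable terms get replaced by the spare name `m`. -/
noncomputable def zap : Term → Term
  | Term.var x => Term.var x
  | Term.name k => if R.zappable (Term.name k) then Term.name R.m else Term.name k
  | Term.pair a b =>
      if R.zappable (Term.pair a b) then Term.name R.m
      else Term.pair (zap a) (zap b)
  | Term.enc a b =>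
      if R.zappable (Term.enc a b) then Term.name R.m
      else Term.enc (zap a) (zap b)

/-- The small substitution λ* corresponding to λ. -/
noncomputable def star (lam : Subst) : Subst := fun x => R.zap (lam x)

/-- The set of typed terms: σ(𝒟) ∪ ω(𝒞) ∪ 𝒱_q. -/
def typedSet : Set Term :=
  Subst.app R.σ '' R.D ∪ Subst.app R.ω '' R.C ∪ varTerms R.Vq

/-- A typed term. -/
def typedTerm (t : Term) : Prop := t ∈ R.typedSet

end RunSetting


/-!
Typed normal proofs are built along a derivation from `σ(Tₖ)`; only a destructor needs care.
Its conclusion is a subterm of `σ(Tₖ)`, so it is either `σ(u)` for a non-variable `u ∈ 𝒞`,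
hence typed, or a subterm of `σ(x)` for a variable `x` received in some `βⱼ`. It therefore
suffices that every subterm of such a `σ(x)` is typed or has a typed normal proof of its own,
which then replaces the destructor.

This invariant is proved by induction along the run. `σ(x)` occurs in a side of the equation
`σμⱼ(βⱼ)`, derivable at step `j - 1`, and the sides of derivable equations are built by pairing
and encryption from derivable terms and instances of the sides of earlier equations `αₕ`. A
ground instance of such a side is itself known to the intruder: since `ω` solves `αₕ`, a side
without quantified variables is a maximal such subterm, i.e. a public term of `αₕ`, so it lies
in `Tₕ`.
-/

namespace Term

variable {s t u : Term}

lemma mem_subterms_self (t : Term) : t ∈ t.subterms := by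
  cases t <;> simp [subterms]

lemma mem_subterms_trans (hu : u ∈ t.subterms) (hs : s ∈ u.subterms) : s ∈ t.subterms := by
  induction t with
  | name | var => simp only [subterms, Set.mem_singleton_iff] at hu; exact hu ▸ hs
  | pair a b iha ihb | enc a b iha ihb =>
    rcases hu with rfl | hu | hu
    exacts [hs, Or.inr (Or.inl (iha hu)), Or.inr (Or.inr (ihb hu))]

lemma tvars_subset_of_mem_subterms (h : s ∈ t.subterms) : s.tvars ⊆ t.tvars := by
  induction t with
  | name | var => simp only [subterms, Set.mem_singleton_iff] at h; exact h ▸ subset_rfl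
  | pair a b iha ihb | enc a b iha ihb =>
    rcases h with rfl | h | h
    exacts [subset_rfl, (iha h).trans Set.subset_union_left, (ihb h).trans Set.subset_union_right]

lemma ground_of_mem_subterms (hg : t.ground) (h : s ∈ t.subterms) : s.ground :=
  Set.subset_eq_empty (tvars_subset_of_mem_subterms h) hg

end Term

namespace Subst

variable {τ : Subst} {s t : Term}

lemma mem_tvars_app {v : ℕ} : v ∈ (τ.app t).tvars ↔ ∃ y ∈ t.tvars, v ∈ (τ y).tvars := by
  induction t with
  | name | var => simp [app, Term.tvars]
  | pair a b iha ihb | enc a b iha ihb =>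
    simp only [app, Term.tvars, Set.mem_union, iha, ihb]
    constructor
    · rintro (⟨y, hy, hv⟩ | ⟨y, hy, hv⟩)
      exacts [⟨y, Or.inl hy, hv⟩, ⟨y, Or.inr hy, hv⟩]
    · rintro ⟨y, hy | hy, hv⟩
      exacts [Or.inl ⟨y, hy, hv⟩, Or.inr ⟨y, hy, hv⟩]

lemma mem_tvars_app_of_eq_var {x : ℕ} (h : x ∈ t.tvars) (hx : τ x = Term.var x) :
    x ∈ (τ.app t).tvars :=
  mem_tvars_app.2 ⟨x, h, by simp [hx, Term.tvars]⟩

lemma mem_subterms_app (h : s ∈ (τ.app t).subterms) :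
    (∃ u ∈ t.subterms, u ∉ Set.range Term.var ∧ s = τ.app u) ∨
      ∃ y ∈ t.tvars, s ∈ (τ y).subterms := by
  induction t with
  | name n =>
    exact Or.inl ⟨_, Term.mem_subterms_self _, by simp, h⟩
  | var x => exact Or.inr ⟨x, rfl, h⟩
  | pair a b iha ihb | enc a b iha ihb =>
    rcases h with rfl | h | h
    · exact Or.inl ⟨_, Term.mem_subterms_self _, by simp, rfl⟩
    · rcases iha h with ⟨u, hu, hv, rfl⟩ | ⟨y, hy, hs⟩
      exacts [Or.inl ⟨u, Or.inr (Or.inl hu), hv, rfl⟩, Or.inr ⟨y, Or.inl hy, hs⟩]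
    · rcases ihb h with ⟨u, hu, hv, rfl⟩ | ⟨y, hy, hs⟩
      exacts [Or.inl ⟨u, Or.inr (Or.inr hu), hv, rfl⟩, Or.inr ⟨y, Or.inr hy, hs⟩]

lemma mem_subterms_app_of_mem_tvars {y : ℕ} (h : y ∈ t.tvars) : τ y ∈ (τ.app t).subterms := by
  induction t with
  | name => exact absurd h id
  | var x => rw [h]; exact Term.mem_subterms_self _
  | pair a b iha ihb | enc a b iha ihb =>
    rcases h with h | h
    exacts [Or.inr (Or.inl (iha h)), Or.inr (Or.inr (ihb h))]

lemma sizeOf_app_le (h : s ∈ t.subterms) : sizeOf (τ.app s) ≤ sizeOf (τ.app t) := by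
  induction t with
  | name | var => simp only [Term.subterms, Set.mem_singleton_iff] at h; exact h ▸ le_rfl
  | pair a b iha ihb | enc a b iha ihb =>
    rcases h with rfl | h | h
    · exact le_rfl
    · have := iha h; simp only [app, Term.pair.sizeOf_spec, Term.enc.sizeOf_spec]; omega
    · have := ihb h; simp only [app, Term.pair.sizeOf_spec, Term.enc.sizeOf_spec]; omega

lemma sizeOf_app_lt (h : s ∈ t.subterms) (hne : s ≠ t) : sizeOf (τ.app s) < sizeOf (τ.app t) := by
  cases t with
  | name | var => simp only [Term.subterms, Set.mem_singleton_iff] at h; exact absurd h hne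
  | pair a b | enc a b =>
    rcases h with h | h | h
    · exact absurd h hne
    all_goals
      have := sizeOf_app_le (τ := τ) h
      simp only [app, Term.pair.sizeOf_spec, Term.enc.sizeOf_spec]
      omega

lemma eq_of_mem_subterms_of_app_eq (h : s ∈ t.subterms) (he : τ.app s = τ.app t) : s = t := by
  by_contra hne
  exact (sizeOf_app_lt h hne).ne (congrArg sizeOf he)

lemma app_app_of_forall {ω : Subst} (h : ∀ x, ω.app (τ x) = ω x) (t : Term) :
    ω.app (τ.app t) = ω.app t := by
  induction t with
  | name => rfl
  | var x => exact h x
  | pair a b iha ihb | enc a b iha ihb => simp only [app, iha, ihb]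

end Subst

lemma Term.subterms_antisymm {s t : Term} (h : s ∈ t.subterms) (h' : t ∈ s.subterms) : s = t := by
  by_contra hne
  have := Subst.sizeOf_app_lt (τ := Term.var) h hne
  have := Subst.sizeOf_app_le (τ := Term.var) h'
  omega

section DolevYao

variable {inv : Term → Term} {X X' : Set Term}

lemma dy.tvars_subset {t : Term} (h : dy inv X t) : t.tvars ⊆ ⋃ w ∈ X, w.tvars := by
  induction h with
  | ax h => exact Set.subset_biUnion_of_mem h
  | pair _ _ iha ihb | enc _ _ iha ihb => exact Set.union_subset iha ihb
  | fst _ ih | dec _ _ ih => exact Set.subset_union_left.trans ih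
  | snd _ ih => exact Set.subset_union_right.trans ih

namespace DPT

lemma valid_mono (hXX : X ⊆ X') {d : DPT} (h : valid inv X d) : valid inv X' d := by
  induction d with
  | ax t => exact hXX h
  | pair p q ihp ihq | enc p q ihp ihq => exact ⟨ihp h.1, ihq h.2⟩
  | fst p ihp | snd p ihp => exact ⟨ihp h.1, h.2⟩
  | dec p q ihp ihq => exact ⟨ihp h.1, ihq h.2.1, h.2.2⟩

lemma concl_pair_eq_some {p q : DPT} {a b : Term}
    (h : concl inv (pair p q) = some (Term.pair a b)) :
    concl inv p = some a ∧ concl inv q = some b := by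
  rcases hp : concl inv p with _ | a' <;> rcases hq : concl inv q with _ | b' <;>
    simp_all [concl]

lemma concl_enc_eq_some {p q : DPT} {a b : Term}
    (h : concl inv (enc p q) = some (Term.enc a b)) :
    concl inv p = some a ∧ concl inv q = some b := by
  rcases hp : concl inv p with _ | a' <;> rcases hq : concl inv q with _ | b' <;>
    simp_all [concl]

lemma eq_pair_of_endsConstructor {d : DPT} {a b : Term} (hd : d.endsConstructor)
    (hc : concl inv d = some (Term.pair a b)) :
    ∃ p q, d = .pair p q ∧ concl inv p = some a ∧ concl inv q = some b := by
  cases d with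
  | pair p q => exact ⟨p, q, rfl, concl_pair_eq_some hc⟩
  | enc p q => rcases hp : concl inv p <;> rcases hq : concl inv q <;> simp [concl, hp, hq] at hc
  | ax | fst | snd | dec => exact hd.elim

lemma eq_enc_of_endsConstructor {d : DPT} {a b : Term} (hd : d.endsConstructor)
    (hc : concl inv d = some (Term.enc a b)) :
    ∃ p q, d = .enc p q ∧ concl inv p = some a ∧ concl inv q = some b := by
  cases d with
  | enc p q => exact ⟨p, q, rfl, concl_enc_eq_some hc⟩
  | pair p q => rcases hp : concl inv p <;> rcases hq : concl inv q <;> simp [concl, hp, hq] at hc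
  | ax | fst | snd | dec => exact hd.elim

def HasTypedNormalProof (inv : Term → Term) (X G : Set Term) (t : Term) : Prop :=
  ∃ d : DPT, valid inv X d ∧ concl inv d = some t ∧ normal d ∧ typed inv G d

namespace HasTypedNormalProof

variable {G : Set Term} {t a b k : Term}

lemma mono (hXX : X ⊆ X') (h : HasTypedNormalProof inv X G t) :
    HasTypedNormalProof inv X' G t :=
  let ⟨d, hv, hc, hn, ht⟩ := h
  ⟨d, valid_mono hXX hv, hc, hn, ht⟩

lemma ax (ht : t ∈ X) (hG : t ∈ G) : HasTypedNormalProof inv X G t :=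
  ⟨.ax t, ht, rfl, trivial, hG⟩

lemma pair (ha : HasTypedNormalProof inv X G a) (hb : HasTypedNormalProof inv X G b) :
    HasTypedNormalProof inv X G (Term.pair a b) :=
  let ⟨p, hvp, hcp, hnp, htp⟩ := ha
  let ⟨q, hvq, hcq, hnq, htq⟩ := hb
  ⟨.pair p q, ⟨hvp, hvq⟩, by simp [concl, hcp, hcq], ⟨hnp, hnq⟩, htp, htq⟩

lemma enc (ha : HasTypedNormalProof inv X G a) (hb : HasTypedNormalProof inv X G b) :
    HasTypedNormalProof inv X G (Term.enc a b) :=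
  let ⟨p, hvp, hcp, hnp, htp⟩ := ha
  let ⟨q, hvq, hcq, hnq, htq⟩ := hb
  ⟨.enc p q, ⟨hvp, hvq⟩, by simp [concl, hcp, hcq], ⟨hnp, hnq⟩, htp, htq⟩

/- The destructor lemmas cut a proof of the major premise that ends in the matching
constructor down to the premise of that constructor, which keeps the result normal. -/

lemma fst (h : HasTypedNormalProof inv X G (Term.pair a b)) (ha : a ∈ G) :
    HasTypedNormalProof inv X G a := by
  obtain ⟨d, hv, hc, hn, ht⟩ := h
  by_cases hd : d.endsConstructor
  · obtain ⟨p, q, rfl, hp, -⟩ := eq_pair_of_endsConstructor hd hc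
    exact ⟨p, hv.1, hp, hn.1, ht.1⟩
  · have hfst : concl inv (.fst d) = some a := by rw [concl, hc]
    exact ⟨.fst d, ⟨hv, a, b, hc⟩, hfst, ⟨hn, hd⟩, ht, by simp_all⟩

lemma snd (h : HasTypedNormalProof inv X G (Term.pair a b)) (hb : b ∈ G) :
    HasTypedNormalProof inv X G b := by
  obtain ⟨d, hv, hc, hn, ht⟩ := h
  by_cases hd : d.endsConstructor
  · obtain ⟨p, q, rfl, -, hq⟩ := eq_pair_of_endsConstructor hd hc
    exact ⟨q, hv.2, hq, hn.2, ht.2⟩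
  · have hsnd : concl inv (.snd d) = some b := by rw [concl, hc]
    exact ⟨.snd d, ⟨hv, a, b, hc⟩, hsnd, ⟨hn, hd⟩, ht, by simp_all⟩

lemma dec (h : HasTypedNormalProof inv X G (Term.enc a k))
    (hk : HasTypedNormalProof inv X G (inv k)) (ha : a ∈ G) :
    HasTypedNormalProof inv X G a := by
  obtain ⟨d, hv, hc, hn, ht⟩ := h
  by_cases hd : d.endsConstructor
  · obtain ⟨p, q, rfl, hp, -⟩ := eq_enc_of_endsConstructor hd hc
    exact ⟨p, hv.1, hp, hn.1, ht.1⟩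
  · obtain ⟨e, hve, hce, hne, hte⟩ := hk
    have hdec : concl inv (.dec d e) = some a := by rw [concl, hc, hce]; simp
    exact ⟨.dec d e, ⟨hv, hve, a, k, hc, hce⟩, hdec, ⟨hn, hne, hd⟩, ht, hte, by simp_all⟩

end HasTypedNormalProof

/-- The second conjunct makes induction on `dy` go through without normalizing first: the
conclusion of a destructor is a subterm of its major premise. -/
theorem hasTypedNormalProof_of_dy {G : Set Term}
    (hX : ∀ w ∈ X, ∀ s ∈ w.subterms, s ∈ G ∨ HasTypedNormalProof inv X G s)
    {t : Term} (h : dy inv X t) :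
    HasTypedNormalProof inv X G t ∧
      ∀ s ∈ t.subterms, s ∈ G ∨ HasTypedNormalProof inv X G s := by
  induction h with
  | ax ht =>
    refine ⟨?_, hX _ ht⟩
    rcases hX _ ht _ (Term.mem_subterms_self _) with hG | hP
    exacts [.ax ht hG, hP]
  | pair _ _ iha ihb =>
    refine ⟨iha.1.pair ihb.1, fun s hs => ?_⟩
    rcases hs with rfl | hs | hs
    exacts [Or.inr (iha.1.pair ihb.1), iha.2 s hs, ihb.2 s hs]
  | enc _ _ iha ihb =>
    refine ⟨iha.1.enc ihb.1, fun s hs => ?_⟩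
    rcases hs with rfl | hs | hs
    exacts [Or.inr (iha.1.enc ihb.1), iha.2 s hs, ihb.2 s hs]
  | fst _ ih =>
    refine ⟨?_, fun s hs => ih.2 s (Or.inr (Or.inl hs))⟩
    rcases ih.2 _ (Or.inr (Or.inl (Term.mem_subterms_self _))) with hG | hP
    exacts [ih.1.fst hG, hP]
  | snd _ ih =>
    refine ⟨?_, fun s hs => ih.2 s (Or.inr (Or.inr hs))⟩
    rcases ih.2 _ (Or.inr (Or.inr (Term.mem_subterms_self _))) with hG | hP
    exacts [ih.1.snd hG, hP]
  | dec _ _ ih ihk =>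
    refine ⟨?_, fun s hs => ih.2 s (Or.inr (Or.inl hs))⟩
    rcases ih.2 _ (Or.inr (Or.inl (Term.mem_subterms_self _))) with hG | hP
    exacts [ih.1.dec ihk.1 hG, hP]

end DPT

end DolevYao

section Equality

variable {inv : Term → Term} {T : Set Term} {E : Set (Term × Term)}

lemma eqdrv.app_eq {τ : Subst} (hE : ∀ e ∈ E, τ.app e.1 = τ.app e.2) {a b : Term}
    (h : eqdrv inv T E a b) : τ.app a = τ.app b := by
  induction h with
  | ax h => exact hE _ h
  | eq _ => rfl
  | sym _ ih => exact ih.symm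
  | trans _ _ ih₁ ih₂ => exact ih₁.trans ih₂
  | consPair _ _ ih₁ ih₂ | consEnc _ _ ih₁ ih₂ => simp only [Subst.app, ih₁, ih₂]
  | projPairFst _ _ _ _ _ ih | projEncFst _ _ _ _ _ ih =>
    simp only [Subst.app, Term.pair.injEq, Term.enc.injEq] at ih; exact ih.1
  | projPairSnd _ _ _ _ _ ih | projEncSnd _ _ _ _ _ ih =>
    simp only [Subst.app, Term.pair.injEq, Term.enc.injEq] at ih; exact ih.2

inductive EqSide (inv : Term → Term) (T : Set Term) (E : Set (Term × Term)) : Term → Prop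
  | dy {t} : dy inv T t → EqSide inv T E t
  | side {t} {e : Term × Term} : e ∈ E → t = e.1 ∨ t = e.2 → EqSide inv T E t
  | pair {a b} : EqSide inv T E a → EqSide inv T E b → EqSide inv T E (Term.pair a b)
  | enc {a b} : EqSide inv T E a → EqSide inv T E b → EqSide inv T E (Term.enc a b)

lemma eqdrv.eqSide {a b : Term} (h : eqdrv inv T E a b) :
    EqSide inv T E a ∧ EqSide inv T E b := by
  induction h with
  | ax h => exact ⟨.side h (Or.inl rfl), .side h (Or.inr rfl)⟩
  | eq h => exact ⟨.dy h, .dy h⟩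
  | sym _ ih => exact ih.symm
  | trans _ _ ih₁ ih₂ => exact ⟨ih₁.1, ih₂.2⟩
  | consPair _ _ ih₁ ih₂ => exact ⟨.pair ih₁.1 ih₂.1, .pair ih₁.2 ih₂.2⟩
  | consEnc _ _ ih₁ ih₂ => exact ⟨.enc ih₁.1 ih₂.1, .enc ih₁.2 ih₂.2⟩
  | projPairFst _ h₀ _ h₂ _ _ | projEncFst _ h₀ _ h₂ _ _ => exact ⟨.dy h₀, .dy h₂⟩
  | projPairSnd _ _ h₁ _ h₃ _ | projEncSnd _ _ h₁ _ h₃ _ => exact ⟨.dy h₁, .dy h₃⟩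

end Equality

lemma mem_pubs_of_side {Vq : Set ℕ} {α : Assertion} {w w' : Term} {τ : Subst}
    (hsides : α.subterms = w.subterms ∪ w'.subterms) (hτ : τ.app w = τ.app w')
    (hVq : w.tvars ∩ Vq = ∅) : w ∈ pubs Vq α := by
  refine ⟨hsides ▸ Or.inl (Term.mem_subterms_self w), hVq, ?_⟩
  rintro ⟨u, hu, hne, hwu, -⟩
  have huw : u ∈ w.subterms := by
    rcases hsides ▸ hu with hu | hu
    · exact hu
    · -- `w` lies inside `w'` but has the same image, so it is `w'` itself
      exact Subst.eq_of_mem_subterms_of_app_eq (Term.mem_subterms_trans hu hwu) hτ ▸ hu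
  exact hne (Term.subterms_antisymm hwu huw)

namespace RunSetting

variable (R : RunSetting)

def X (k : ℕ) : Set Term := Subst.app R.σ '' R.T k

def G : Set Term := Subst.app R.σ '' R.D ∪ varTerms R.Vq

def Received (k y : ℕ) : Prop := y ∈ R.Vq ∨ ∃ j, 1 ≤ j ∧ j ≤ k ∧ y ∈ (R.β j).fv

def Anchored (k : ℕ) (w : Term) : Prop := w.subterms ⊆ R.C ∧ ∀ y ∈ w.tvars, R.Received k y

def InstanceTyped (j : ℕ) : Prop :=
  ∀ x ∈ (R.β j).fv, (R.σ x).ground ∧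
    ∀ s ∈ (R.σ x).subterms, s ∈ R.G ∨ DPT.HasTypedNormalProof R.inv (R.X (j - 1)) R.G s

variable {R} {h j k : ℕ} {t w : Term}

lemma T_mono : Monotone R.T := monotone_nat_of_le_succ R.hTmono

lemma X_mono (hjk : j ≤ k) : R.X j ⊆ R.X k := Set.image_mono (T_mono hjk)

lemma app_mem_G {u : Term} (hC : u ∈ R.C) (hu : u ∉ Set.range Term.var) : R.σ.app u ∈ R.G :=
  Or.inl ⟨u, ⟨hC, hu⟩, rfl⟩

lemma var_mem_G {y : ℕ} (hy : y ∈ R.Vq) : Term.var y ∈ R.G := Or.inr ⟨y, hy, rfl⟩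

lemma alpha_mem_E (h1 : 1 ≤ h) (hn : h ≤ R.n) : ((R.α h).l, (R.α h).r) ∈ R.E h := by
  rw [R.hEstep h h1 hn]
  exact Or.inr rfl

lemma exists_alpha_of_mem_E : ∀ {k}, k ≤ R.n → ∀ {e}, e ∈ R.E k →
    ∃ h, 1 ≤ h ∧ h ≤ k ∧ e = ((R.α h).l, (R.α h).r)
  | 0, _, e, he => by rw [R.hE0] at he; exact he.elim
  | k + 1, hk, e, he => by
    rw [R.hEstep (k + 1) (by omega) hk, Nat.add_sub_cancel] at he
    rcases he with he | rfl
    · obtain ⟨h, h1, hh, rfl⟩ := exists_alpha_of_mem_E (by omega) he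
      exact ⟨h, h1, by omega, rfl⟩
    · exact ⟨k + 1, by omega, le_rfl, rfl⟩

lemma received_mono (hjk : j ≤ k) {y : ℕ} (hy : R.Received j y) : R.Received k y := by
  rcases hy with hy | ⟨i, h1, hi, hy⟩
  exacts [Or.inl hy, Or.inr ⟨i, h1, hi.trans hjk, hy⟩]

lemma received_of_mem_alpha (h1 : 1 ≤ h) (hn : h ≤ R.n) {y : ℕ}
    (hy : y ∈ (R.α h).l.tvars ∪ (R.α h).r.tvars) : R.Received h y := by
  by_cases hyVq : y ∈ R.Vq
  · exact Or.inl hyVq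
  · exact Or.inr (R.hfvEarlier h h1 hn y ⟨hy, fun hb => hyVq (R.hαbv h h1 hn hb)⟩)

lemma received_of_mem_T : ∀ {k}, k ≤ R.n → t ∈ R.T k → ∀ y ∈ t.tvars, R.Received k y
  | 0, _, ht, y, hy => (Set.eq_empty_iff_forall_notMem.1 (R.hT0 t ht) y hy).elim
  | k + 1, hk, ht, y, hy => by
    rw [R.hTstep (k + 1) (by omega) hk, Nat.add_sub_cancel] at ht
    rcases ht with (ht | ⟨hsub, -⟩) | ⟨z, hz, rfl⟩
    · exact received_mono k.le_succ (received_of_mem_T (by omega) ht y hy)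
    · refine received_of_mem_alpha (by omega) hk ?_
      rcases hsub with hsub | hsub
      exacts [Or.inl (Term.tvars_subset_of_mem_subterms hsub hy),
        Or.inr (Term.tvars_subset_of_mem_subterms hsub hy)]
    · rw [hy]
      exact Or.inl (R.hαbv (k + 1) (by omega) hk hz)

lemma anchored_of_mem_T (hk : k ≤ R.n) (ht : t ∈ R.T k) : R.Anchored k t :=
  ⟨fun _ hu => Set.mem_iUnion₂.2 ⟨k, hk, Or.inl (Set.mem_iUnion₂.2 ⟨t, Or.inl ht, hu⟩)⟩,
    received_of_mem_T hk ht⟩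

lemma anchored_of_side (h1 : 1 ≤ h) (hhk : h ≤ k) (hk : k ≤ R.n)
    (hw : w = (R.α h).l ∨ w = (R.α h).r) : R.Anchored k w := by
  have hE := alpha_mem_E h1 (hhk.trans hk)
  have hsub : w.subterms ⊆ (R.α h).l.subterms ∪ (R.α h).r.subterms := by
    rcases hw with rfl | rfl
    exacts [Set.subset_union_left, Set.subset_union_right]
  refine ⟨fun u hu => Set.mem_iUnion₂.2 ⟨h, hhk.trans hk,
    Or.inr (Set.mem_iUnion₂.2 ⟨_, Or.inl hE, hsub hu⟩)⟩, fun y hy => ?_⟩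
  refine received_mono hhk (received_of_mem_alpha h1 (hhk.trans hk) ?_)
  rcases hw with rfl | rfl
  exacts [Or.inl hy, Or.inr hy]

lemma exists_side_of_mem_E (hk : k ≤ R.n) {e : Term × Term} (he : e ∈ pairImg R.σ (R.E k))
    (ht : t = e.1 ∨ t = e.2) :
    ∃ h w, 1 ≤ h ∧ h ≤ k ∧ (w = (R.α h).l ∨ w = (R.α h).r) ∧ t = R.σ.app w := by
  obtain ⟨f, hf, rfl⟩ := he
  obtain ⟨h, h1, hh, rfl⟩ := exists_alpha_of_mem_E hk hf
  rcases ht with rfl | rfl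
  exacts [⟨h, _, h1, hh, Or.inl rfl, rfl⟩, ⟨h, _, h1, hh, Or.inr rfl, rfl⟩]

/-- Since `ω` absorbs `σ`, `μⱼ` and `θⱼ`, the soundness of `⊢eq` carries the equations of the
earlier steps through each received `βⱼ` to the next `αₕ`. -/
lemma app_ω_alpha : ∀ h, 1 ≤ h → h ≤ R.n → R.ω.app (R.α h).l = R.ω.app (R.α h).r := by
  intro h
  induction h using Nat.strong_induction_on with
  | _ h IH =>
  intro h1 hn
  have hωσ := Subst.app_app_of_forall R.hωσ
  have hβ : ∀ j, 1 ≤ j → j ≤ h → R.ω.app (R.β j).l = R.ω.app (R.β j).r := by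
    intro j hj1 hjh
    have hE : ∀ e ∈ pairImg R.σ (R.E (j - 1)), R.ω.app e.1 = R.ω.app e.2 := by
      rintro _ ⟨f, hf, rfl⟩
      obtain ⟨h', h1', hh', rfl⟩ := exists_alpha_of_mem_E (by omega) hf
      simpa only [hωσ] using IH h' (by omega) h1' (by omega)
    simpa only [hωσ, Subst.app_app_of_forall (R.hωμ j hj1 (by omega))]
      using (R.hμeq j hj1 (by omega)).app_eq hE
  have hF : ∀ e ∈ pairImg R.σ (R.F h), R.ω.app e.1 = R.ω.app e.2 := by
    rintro _ ⟨f, hf, rfl⟩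
    obtain ⟨j, hj1, hjh, rfl⟩ := R.hFmem h h1 hn f hf
    simpa only [hωσ] using hβ j hj1 hjh
  simpa only [hωσ, Subst.app_app_of_forall (R.hωθ h h1 hn)] using (R.hθeq h h1 hn).app_eq hF

lemma side_mem_T (h1 : 1 ≤ h) (hn : h ≤ R.n) (hw : w = (R.α h).l ∨ w = (R.α h).r)
    (hVq : w.tvars ∩ R.Vq = ∅) : w ∈ R.T h := by
  have hpub : w ∈ pubs R.Vq (R.α h) := by
    rcases hw with rfl | rfl
    · exact mem_pubs_of_side rfl (app_ω_alpha h h1 hn) hVq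
    · exact mem_pubs_of_side (Set.union_comm _ _) (app_ω_alpha h h1 hn).symm hVq
  rw [R.hTstep h h1 hn]
  exact Or.inl (Or.inr hpub)

lemma tvars_app_subset_Vq (hVC : ∀ j, 1 ≤ j → j ≤ k → R.InstanceTyped j)
    (hw : ∀ y ∈ w.tvars, R.Received k y) : (R.σ.app w).tvars ⊆ R.Vq := by
  intro v hv
  obtain ⟨y, hy, hvy⟩ := Subst.mem_tvars_app.1 hv
  rcases hw y hy with hyVq | ⟨j, hj1, hjk, hyj⟩
  · rw [R.hσVq y hyVq] at hvy
    exact hvy ▸ hyVq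
  · exact absurd hvy (Set.eq_empty_iff_forall_notMem.1 (hVC j hj1 hjk y hyj).1 v)

lemma typed_or_of_mem_subterms_app (hVC : ∀ j, 1 ≤ j → j ≤ k → R.InstanceTyped j)
    (hw : R.Anchored k w) {s : Term} (hs : s ∈ (R.σ.app w).subterms) :
    s ∈ R.G ∨ DPT.HasTypedNormalProof R.inv (R.X k) R.G s := by
  rcases Subst.mem_subterms_app hs with ⟨u, hu, hvar, rfl⟩ | ⟨y, hy, hsy⟩
  · exact Or.inl (app_mem_G (hw.1 hu) hvar)
  rcases hw.2 y hy with hyVq | ⟨j, hj1, hjk, hyj⟩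
  · rw [R.hσVq y hyVq] at hsy
    exact Or.inl (hsy ▸ var_mem_G hyVq)
  · exact ((hVC j hj1 hjk y hyj).2 s hsy).imp_right (·.mono (X_mono (by omega)))

lemma hasTypedNormalProof_X (hk : k ≤ R.n) (hVC : ∀ j, 1 ≤ j → j ≤ k → R.InstanceTyped j)
    (h : dy R.inv (R.X k) t) :
    DPT.HasTypedNormalProof R.inv (R.X k) R.G t ∧
      ∀ s ∈ t.subterms, s ∈ R.G ∨ DPT.HasTypedNormalProof R.inv (R.X k) R.G s :=
  DPT.hasTypedNormalProof_of_dy (by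
    rintro _ ⟨t₀, ht₀, rfl⟩ s hs
    exact typed_or_of_mem_subterms_app hVC (anchored_of_mem_T hk ht₀) hs) h

lemma tvars_subset_Vq_of_eqSide (hk : k ≤ R.n) (hVC : ∀ j, 1 ≤ j → j ≤ k → R.InstanceTyped j)
    (h : EqSide R.inv (R.X k) (pairImg R.σ (R.E k)) t) : t.tvars ⊆ R.Vq := by
  induction h with
  | dy h =>
    refine h.tvars_subset.trans (Set.iUnion₂_subset ?_)
    rintro _ ⟨t₀, ht₀, rfl⟩
    exact tvars_app_subset_Vq hVC (received_of_mem_T hk ht₀)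
  | side he ht =>
    obtain ⟨h, w, h1, hhk, hw, rfl⟩ := exists_side_of_mem_E hk he ht
    exact tvars_app_subset_Vq hVC (anchored_of_side h1 hhk hk hw).2
  | pair _ _ iha ihb | enc _ _ iha ihb => exact Set.union_subset iha ihb

lemma dy_of_eqSide (hk : k ≤ R.n) (h : EqSide R.inv (R.X k) (pairImg R.σ (R.E k)) t)
    (hg : t.ground) : dy R.inv (R.X k) t := by
  induction h with
  | dy h => exact h
  | side he ht =>
    obtain ⟨h, w, h1, hhk, hw, rfl⟩ := exists_side_of_mem_E hk he ht
    -- `σ` fixes quantifiable variables, so they cannot occur in `w`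
    have hVq : w.tvars ∩ R.Vq = ∅ := Set.eq_empty_of_forall_notMem fun y ⟨hy, hyVq⟩ =>
      Set.eq_empty_iff_forall_notMem.1 hg y (Subst.mem_tvars_app_of_eq_var hy (R.hσVq y hyVq))
    exact dy.ax ⟨w, T_mono hhk (side_mem_T h1 (hhk.trans hk) hw hVq), rfl⟩
  | pair _ _ iha ihb =>
    exact dy.pair (iha (Set.union_empty_iff.1 hg).1) (ihb (Set.union_empty_iff.1 hg).2)
  | enc _ _ iha ihb =>
    exact dy.enc (iha (Set.union_empty_iff.1 hg).1) (ihb (Set.union_empty_iff.1 hg).2)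

lemma typed_or_of_eqSide (hk : k ≤ R.n) (hVC : ∀ j, 1 ≤ j → j ≤ k → R.InstanceTyped j)
    (h : EqSide R.inv (R.X k) (pairImg R.σ (R.E k)) t) {s : Term} (hs : s ∈ t.subterms)
    (hg : s.ground) : s ∈ R.G ∨ DPT.HasTypedNormalProof R.inv (R.X k) R.G s := by
  induction h with
  | dy h => exact (hasTypedNormalProof_X hk hVC h).2 s hs
  | side he ht =>
    obtain ⟨h, w, h1, hhk, hw, rfl⟩ := exists_side_of_mem_E hk he ht
    exact typed_or_of_mem_subterms_app hVC (anchored_of_side h1 hhk hk hw) hs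
  | pair ha hb iha ihb =>
    rcases hs with rfl | hs | hs
    exacts [Or.inr (hasTypedNormalProof_X hk hVC (dy_of_eqSide hk (.pair ha hb) hg)).1,
      iha hs, ihb hs]
  | enc ha hb iha ihb =>
    rcases hs with rfl | hs | hs
    exacts [Or.inr (hasTypedNormalProof_X hk hVC (dy_of_eqSide hk (.enc ha hb) hg)).1,
      iha hs, ihb hs]

theorem instanceTyped : ∀ j, 1 ≤ j → j ≤ R.n → R.InstanceTyped j := by
  intro j
  induction j using Nat.strong_induction_on with
  | _ j IH =>
  intro hj1 hjn x hx
  have hVC : ∀ i, 1 ≤ i → i ≤ j - 1 → R.InstanceTyped i :=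
    fun i h1 hi => IH i (by omega) h1 (by omega)
  have hk : j - 1 ≤ R.n := by omega
  have hμx : R.μ j x = Term.var x := by_contra fun hne => hx.2 (R.hμdom j hj1 hjn hne)
  -- `x` survives `μⱼ` in a side `w` of `βⱼ`, and `σ(μⱼ(w))` is a side of a derivable equality
  obtain ⟨w, hxw, hw⟩ : ∃ w, x ∈ ((R.μ j).app w).tvars ∧
      EqSide R.inv (R.X (j - 1)) (pairImg R.σ (R.E (j - 1))) (R.σ.app ((R.μ j).app w)) := by
    have hside := (R.hμeq j hj1 hjn).eqSide
    rcases hx.1 with hxw | hxw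
    exacts [⟨_, Subst.mem_tvars_app_of_eq_var hxw hμx, hside.1⟩,
      ⟨_, Subst.mem_tvars_app_of_eq_var hxw hμx, hside.2⟩]
  have hground : (R.σ x).ground := by
    by_cases hdom : x ∈ R.σ.dom
    · exact R.hσground x hdom
    · have hxVq := tvars_subset_Vq_of_eqSide hk hVC hw
        (Subst.mem_tvars_app_of_eq_var hxw (not_not.1 hdom))
      exact (Set.eq_empty_iff_forall_notMem.1 (R.hβfv j hj1 hjn) x ⟨hx, hxVq⟩).elim
  have hσx := Subst.mem_subterms_app_of_mem_tvars (τ := R.σ) hxw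
  exact ⟨hground, fun s hs => typed_or_of_eqSide hk hVC hw (Term.mem_subterms_trans hσx hs)
    (Term.ground_of_mem_subterms hground hs)⟩

end RunSetting

/-- Theorem (rustur): typed normal DY proofs. -/
theorem stmt13 (R : RunSetting) (t : Term) (i : ℕ) (hi : i ≤ R.n)
    (h : dy R.inv (Subst.app R.σ '' R.T i) t) :
    ∃ d : DPT, DPT.valid R.inv (Subst.app R.σ '' R.T i) d ∧
      DPT.concl R.inv d = some t ∧ DPT.normal d ∧
      DPT.typed R.inv (Subst.app R.σ '' R.D ∪ varTerms R.Vq) d :=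
  (RunSetting.hasTypedNormalProof_X hi
    (fun j h1 hj => R.instanceTyped j h1 (hj.trans hi)) h).1
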